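/- Let μ be a probability distribution on [0,1]^d whose one-dimensional marginals have densities bounded by M. For every c ≥ 1 and every δ > 0 there exists a ReLU network N : ℝ^d → ℝ^{c·d} of depth 2 and size at most 4d·2^c + cd such that Pr_{x∼μ}[N(x) = bin_c(x)] ≥ 1 − δ. -/

import Mathlib

open MeasureTheory
open scoped ENNReal

noncomputable section

/-- The ReLU activation. -/
def relu (t : ℝ) : ℝ := max 0 t

/-- A feedforward neural network from `ℝ^n` to `ℝ^q`, given as a sequence of affine
layers; the activation is applied coordinatewise after every affine layer except the
last one. -/
inductive Net : ℕ → ℕ → Type where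
  | last {n q : ℕ} (A : Fin q → Fin n → ℝ) (b : Fin q → ℝ) : Net n q
  | layer {n m q : ℕ} (A : Fin m → Fin n → ℝ) (b : Fin m → ℝ) (rest : Net m q) : Net n q

/-- Evaluation of a network with activation `σ`. -/
def Net.eval (σ : ℝ → ℝ) : {n q : ℕ} → Net n q → (Fin n → ℝ) → Fin q → ℝ
  | _, _, .last A b, x, i => (∑ j, A i j * x j) + b i
  | _, _, .layer A b rest, x, i => rest.eval σ (fun m => σ ((∑ j, A m j * x j) + b m)) i

/-- The size of a network: the total number of neurons. -/
def Net.size : {n q : ℕ} → Net n q → ℕ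
  | _, q, .last _ _ => q
  | _, _, .layer (m := m) _ _ rest => m + rest.size

/-- The depth of a network: its number of layers. -/
def Net.depth : {n q : ℕ} → Net n q → ℕ
  | _, _, .last _ _ => 1
  | _, _, .layer _ _ rest => 1 + rest.depth

/-- The `j`-th bit (as a real number) of the `c`-bit binary representation of
`min(⌊2^c t⌋, 2^c − 1)`. -/
def bitRep (c : ℕ) (t : ℝ) (j : Fin c) : ℝ :=
  if (min (⌊(2:ℝ) ^ c * t⌋.toNat) (2 ^ c - 1)).testBit j then 1 else 0

/-- `bin_c(x) ∈ {0,1}^{c·d}`: the concatenation over `i = 1,…,d` of the `c`-bit binary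
representations of the integers `min(⌊2^c x_i⌋, 2^c − 1)`. -/
def binc (c d : ℕ) (x : Fin d → ℝ) : Fin (c * d) → ℝ :=
  fun p => bitRep c (x (finProdFinEquiv.symm p).2) (finProdFinEquiv.symm p).1

/-!
Bit `j` of `n = min(⌊2^c t⌋, 2^c − 1)` telescopes as
`∑_{k < 2^c − 1} (b_j(k+1) − b_j(k)) · [t ≥ (k+1)/2^c]`. Each indicator is reproduced exactly by the
two-ReLU ramp `relu(s/ε + 1) − relu(s/ε)`, `s = t − (k+1)/2^c`, except on the interval of length
`ε` just left of its threshold. So one hidden layer of `2d(2^c − 1)` neurons computes `bin_c`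
off a union of `d(2^c − 1)` such slabs, whose μ-mass is at most `d · 2^c · M · ε` by the
marginal density bound; take `ε` small.
-/

def gridPoint (c m : ℕ) : ℝ := (m : ℝ) / 2 ^ c

def level (c : ℕ) (t : ℝ) : ℕ := min ⌊(2:ℝ) ^ c * t⌋.toNat (2 ^ c - 1)

def bitReal (j n : ℕ) : ℝ := if n.testBit j then 1 else 0

lemma level_le (c : ℕ) (t : ℝ) : level c t ≤ 2 ^ c - 1 := min_le_right _ _

lemma bitRep_eq_bitReal_level (c : ℕ) (t : ℝ) (j : Fin c) :
    bitRep c t j = bitReal j (level c t) := rfl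

lemma gridPoint_succ_le_iff_lt_level {c k : ℕ} (hk : k + 1 ≤ 2 ^ c - 1) (t : ℝ) :
    gridPoint c (k + 1) ≤ t ↔ k < level c t := by
  have hfloor : gridPoint c (k + 1) ≤ t ↔ (k + 1 : ℤ) ≤ ⌊(2:ℝ) ^ c * t⌋ := by
    rw [gridPoint, div_le_iff₀ (by positivity), Int.le_floor, mul_comm]
    push_cast; rfl
  rw [hfloor, level]
  omega

lemma sum_range_ite_lt_sub {G : Type*} [AddCommGroup G] (f : ℕ → G) {n K : ℕ} (hn : n ≤ K) :
    ∑ k ∈ Finset.range K, (if k < n then f (k + 1) - f k else 0) = f n - f 0 := by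
  rw [← Finset.sum_filter, ← Finset.sum_range_sub]
  congr 1
  ext k
  simp only [Finset.mem_filter, Finset.mem_range]
  omega

lemma bitRep_eq_sum (c : ℕ) (t : ℝ) (j : Fin c) :
    bitRep c t j = ∑ k : Fin (2 ^ c - 1),
      (bitReal j (k + 1) - bitReal j k) * if gridPoint c (k + 1) ≤ t then 1 else 0 := by
  simp only [fun k : Fin (2 ^ c - 1) => gridPoint_succ_le_iff_lt_level k.isLt t, mul_ite,
    mul_one, mul_zero]
  rw [Fin.sum_univ_eq_sum_range
      (fun k => if k < level c t then bitReal j (k + 1) - bitReal j k else 0),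
    sum_range_ite_lt_sub _ (level_le c t)]
  simp [bitReal, bitRep_eq_bitReal_level]

def ramp (ε t : ℝ) : ℝ := relu (t / ε + 1) - relu (t / ε)

lemma ramp_sub_eq_ite {ε : ℝ} (hε : 0 < ε) {a t : ℝ} (ht : t ∉ Set.Ioo (a - ε) a) :
    ramp ε (t - a) = if a ≤ t then 1 else 0 := by
  unfold ramp relu
  split_ifs with hat
  · have : 0 ≤ (t - a) / ε := div_nonneg (by linarith) hε.le
    rw [max_eq_right this, max_eq_right (by linarith)]
    ring
  · have hle : t - a ≤ -ε := by
      by_contra h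
      exact ht ⟨by linarith, by linarith⟩
    have : (t - a) / ε ≤ -1 := by rwa [div_le_iff₀ hε, neg_one_mul]
    rw [max_eq_left (by linarith), max_eq_left (by linarith), sub_zero]

def Net.ofHidden {n q : ℕ} {ι : Type*} [Fintype ι] (w : ι → Fin n → ℝ) (b : ι → ℝ)
    (v : Fin q → ι → ℝ) : Net n q :=
  .layer (fun u => w ((Fintype.equivFin ι).symm u)) (fun u => b ((Fintype.equivFin ι).symm u))
    (.last (fun p u => v p ((Fintype.equivFin ι).symm u)) 0)

section ofHidden

variable {n q : ℕ} {ι : Type*} [Fintype ι] (w : ι → Fin n → ℝ) (b : ι → ℝ) (v : Fin q → ι → ℝ)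

lemma Net.depth_ofHidden : (Net.ofHidden w b v).depth = 2 := rfl

lemma Net.size_ofHidden : (Net.ofHidden w b v).size = Fintype.card ι + q := rfl

lemma Net.eval_ofHidden (σ : ℝ → ℝ) (x : Fin n → ℝ) (p : Fin q) :
    (Net.ofHidden w b v).eval σ x p = ∑ h, v p h * σ (∑ j, w h j * x j + b h) := by
  simp only [Net.ofHidden, Net.eval, Pi.zero_apply, add_zero]
  exact Equiv.sum_comp (Fintype.equivFin ι).symm fun h => v p h * σ (∑ j, w h j * x j + b h)

end ofHidden

/-- Hidden neurons `(i, k, s)` come in pairs `s = true, false` whose difference is the ramp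
`ramp ε (x i - gridPoint c (k + 1))`; output bit `j` of coordinate `i` weighs that ramp by the
jump of bit `j` between `k` and `k + 1`. -/
def binNet (c d : ℕ) (ε : ℝ) : Net d (c * d) :=
  Net.ofHidden (ι := Fin d × Fin (2 ^ c - 1) × Bool)
    (fun h j => if j = h.1 then ε⁻¹ else 0)
    (fun h => -gridPoint c (h.2.1 + 1) / ε + if h.2.2 then 1 else 0)
    (fun p h => if h.1 = (finProdFinEquiv.symm p).2 then
      (if h.2.2 then 1 else -1) *
        (bitReal (finProdFinEquiv.symm p).1 (h.2.1 + 1) - bitReal (finProdFinEquiv.symm p).1 h.2.1)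
      else 0)

lemma binNet_size (c d : ℕ) (ε : ℝ) : (binNet c d ε).size = 2 * (2 ^ c - 1) * d + c * d := by
  simp only [binNet, Net.size_ofHidden, Fintype.card_prod, Fintype.card_fin, Fintype.card_bool]
  ring

lemma binNet_eval (c d : ℕ) (ε : ℝ) (x : Fin d → ℝ) (j : Fin c) (i : Fin d) :
    (binNet c d ε).eval relu x (finProdFinEquiv (j, i)) = ∑ k : Fin (2 ^ c - 1),
      (bitReal j (k + 1) - bitReal j k) * ramp ε (x i - gridPoint c (k + 1)) := by
  rw [binNet, Net.eval_ofHidden, Fintype.sum_prod_type,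
    Fintype.sum_eq_single i fun i' hi' => by simp [hi']]
  simp only [Equiv.symm_apply_apply, if_true, Fintype.sum_prod_type, Fintype.sum_bool, ite_mul,
    zero_mul, Finset.sum_ite_eq', Finset.mem_univ]
  refine Finset.sum_congr rfl fun k _ => ?_
  simp only [Bool.false_eq_true, if_false, ramp]
  ring_nf

lemma binNet_eval_eq_binc {c d : ℕ} {ε : ℝ} (hε : 0 < ε) {x : Fin d → ℝ}
    (hx : ∀ i (k : Fin (2 ^ c - 1)), x i ∉ Set.Ioo (gridPoint c (k + 1) - ε) (gridPoint c (k + 1)))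
    (p : Fin (c * d)) : (binNet c d ε).eval relu x p = binc c d x p := by
  obtain ⟨⟨j, i⟩, rfl⟩ := finProdFinEquiv.surjective p
  rw [binNet_eval, binc, Equiv.symm_apply_apply, bitRep_eq_sum]
  exact Finset.sum_congr rfl fun k _ => by rw [ramp_sub_eq_ite hε (hx i k)]

lemma measure_iUnion_preimage_eval_le {ι κ : Type*} [Fintype ι] [Fintype κ]
    {μ : Measure (ι → ℝ)} {M : ℝ}
    (hmarg : ∀ i : ι, ∀ s : Set ℝ, MeasurableSet s →
      μ.map (fun x => x i) s ≤ ENNReal.ofReal M * volume s)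
    {s : κ → Set ℝ} (hs : ∀ k, MeasurableSet (s k)) :
    μ (⋃ i, ⋃ k, (fun x => x i) ⁻¹' s k) ≤ ∑ _i : ι, ∑ k, ENNReal.ofReal M * volume (s k) := by
  refine (measure_iUnion_fintype_le μ _).trans <| Finset.sum_le_sum fun i _ =>
    (measure_iUnion_fintype_le μ _).trans <| Finset.sum_le_sum fun k _ => ?_
  rw [← Measure.map_apply (measurable_pi_apply i) (hs k)]
  exact hmarg i _ (hs k)

theorem depth_two_binary_extraction_general (d : ℕ) (M : ℝ) (μ : Measure (Fin d → ℝ))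
    (hprob : IsProbabilityMeasure μ)
    (hmarg : ∀ i : Fin d, ∀ s : Set ℝ, MeasurableSet s →
      μ.map (fun x => x i) s ≤ ENNReal.ofReal M * volume s)
    (c : ℕ) (δ : ℝ) (hδ : 0 < δ) :
    ∃ N : Net d (c * d), N.depth = 2 ∧ N.size ≤ 4 * d * 2 ^ c + c * d ∧
      ENNReal.ofReal (1 - δ) ≤ μ {x | ∀ p, N.eval relu x p = binc c d x p} := by
  obtain ⟨ε, hε, hεδ⟩ := ENNReal.exists_nnreal_pos_mul_lt
    (a := d * (2 ^ c - 1 : ℕ) * ENNReal.ofReal M) (by finiteness) (ENNReal.ofReal_pos.2 hδ).ne'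
  set B := ⋃ i : Fin d, ⋃ k : Fin (2 ^ c - 1),
    (fun x : Fin d → ℝ => x i) ⁻¹' Set.Ioo (gridPoint c (k + 1) - ε) (gridPoint c (k + 1))
  have hBm : MeasurableSet B := by measurability
  have hB : μ B ≤ ENNReal.ofReal δ := calc
    μ B ≤ ∑ _i : Fin d, ∑ k : Fin (2 ^ c - 1),
        ENNReal.ofReal M * volume (Set.Ioo (gridPoint c (k + 1) - ε) (gridPoint c (k + 1))) :=
      measure_iUnion_preimage_eval_le hmarg fun _ => measurableSet_Ioo
    _ = ε * (d * (2 ^ c - 1 : ℕ) * ENNReal.ofReal M) := by simp [Real.volume_Ioo]; ring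
    _ ≤ ENNReal.ofReal δ := hεδ.le
  refine ⟨binNet c d ε, Net.depth_ofHidden .., ?_, ?_⟩
  · rw [binNet_size]
    have : 2 * (2 ^ c - 1) ≤ 4 * 2 ^ c := by omega
    nlinarith
  · calc ENNReal.ofReal (1 - δ) = 1 - ENNReal.ofReal δ := by simp [ENNReal.ofReal_sub 1 hδ.le]
      _ ≤ 1 - μ B := tsub_le_tsub_left hB 1
      _ = μ Bᶜ := (prob_compl_eq_one_sub hBm).symm
      _ ≤ _ := measure_mono fun x hx => binNet_eval_eq_binc (NNReal.coe_pos.2 hε)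
        fun i k hik => hx (Set.mem_iUnion₂.2 ⟨i, k, hik⟩)

/-- let `μ` be a probability distribution on `[0,1]^d` whose
one-dimensional marginals have densities bounded by `M`. For every `c ≥ 1` and every
`δ > 0` there exists a ReLU network `N : ℝ^d → ℝ^{c·d}` of depth `2` and size at most
`4d·2^c + cd` such that `Pr_{x∼μ}[N(x) = bin_c(x)] ≥ 1 − δ`. -/
theorem depth_two_binary_extraction (d : ℕ) (M : ℝ) (μ : Measure (Fin d → ℝ))
    (hprob : IsProbabilityMeasure μ)
    (hsupp : μ {x | ∀ i, x i ∈ Set.Icc (0:ℝ) 1} = 1)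
    (hmarg : ∀ i : Fin d, ∀ s : Set ℝ, MeasurableSet s →
      μ.map (fun x => x i) s ≤ ENNReal.ofReal M * volume s)
    (c : ℕ) (hc : 1 ≤ c) (δ : ℝ) (hδ : 0 < δ) :
    ∃ N : Net d (c * d), N.depth = 2 ∧ N.size ≤ 4 * d * 2 ^ c + c * d ∧
      ENNReal.ofReal (1 - δ) ≤ μ {x | ∀ p, N.eval relu x p = binc c d x p} :=
  depth_two_binary_extraction_general d M μ hprob hmarg c δ hδ

end
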